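/- arXiv:1407.0598 — 2 statements merged into one kernel-verified Lean document; each statement's English description precedes it below -/
import Mathlib

section
/- Let N ≥ 0 be an integer and let f : ℝ → ℝ be in H^1_loc with ⟨x⟩^N f ∈ L² and ⟨x⟩^{N+1} f' ∈ L², where ⟨x⟩ = √(1+x²). Then ⟨x⟩^{N+1/2} f(x) → 0 as |x| → ∞; in particular f(x) = o(|x|^{-N}) as x → ±∞. -/
/-!
With `W = (⟨t⟩^N f)² + (⟨t⟩^(N+1) f')²`, which is integrable, fix `x` and `R = |x|/2`; every `t`
between `x/2` and `x` has `|t| ≥ R`. On that interval some `y` has `R^(2N+1) f(y)² ≤ ∫ W` (mean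
value), and `f(x)² - f(y)² = ∫ 2 f f'` with `R^(2N+1) |2 f f'| ≤ ⟨t⟩^(2N+1) |2 f f'| ≤ W` by AM-GM.
Hence `R^(2N+1) f(x)² ≤ 2 ∫_{|t| ≥ R} W`, which tends to `0`, and `⟨x⟩ ≤ 4R` once `|x| ≥ 1`.
-/

open MeasureTheory Filter

/-- The Japanese bracket `⟨x⟩ = √(1+x²)`. -/
noncomputable def jp (x : ℝ) : ℝ := Real.sqrt (1 + x ^ 2)

open Set Topology
open scoped Interval

lemma jp_nonneg (x : ℝ) : 0 ≤ jp x := Real.sqrt_nonneg _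

lemma abs_le_jp (x : ℝ) : |x| ≤ jp x := by
  rw [jp, ← Real.sqrt_sq_eq_abs]
  exact Real.sqrt_le_sqrt (by linarith)

lemma jp_le_two_mul_abs {x : ℝ} (hx : 1 ≤ |x|) : jp x ≤ 2 * |x| := by
  rw [jp, ← Real.sqrt_sq (by positivity : 0 ≤ 2 * |x|)]
  exact Real.sqrt_le_sqrt (by nlinarith [sq_abs x])

lemma jp_rpow_add_half_sq (N : ℕ) (x : ℝ) :
    (jp x ^ ((N : ℝ) + 1 / 2)) ^ 2 = jp x ^ (2 * N + 1) := by
  rw [← Real.rpow_natCast _ 2, ← Real.rpow_mul (jp_nonneg x), ← Real.rpow_natCast]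
  push_cast
  ring_nf

lemma tendsto_setIntegral_le_abs_atTop {E : Type*} [NormedAddCommGroup E] [NormedSpace ℝ E]
    {g : ℝ → E} (hg : Integrable g) :
    Tendsto (fun R ↦ ∫ t in {t | R ≤ |t|}, g t) atTop (𝓝 0) := by
  have hempty : (⋂ R : ℝ, {t : ℝ | R ≤ |t|}) = ∅ :=
    eq_empty_of_forall_notMem fun t ht ↦ by
      linarith [show |t| + 1 ≤ |t| from mem_iInter.1 ht (|t| + 1)]
  have hanti : Antitone fun R : ℝ ↦ {t : ℝ | R ≤ |t|} := fun _ _ hRS _ ht ↦ hRS.trans ht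
  simpa [hempty] using tendsto_setIntegral_of_antitone
    (fun R ↦ measurableSet_le measurable_const measurable_abs) hanti ⟨0, hg.integrableOn⟩

lemma exists_mem_uIcc_mul_le_setIntegral {g : ℝ → ℝ} {a b : ℝ}
    (hg : ContinuousOn g (uIcc a b)) :
    ∃ y ∈ uIcc a b, |b - a| * g y ≤ ∫ t in Ι a b, g t := by
  obtain ⟨y, hy, hmin⟩ := isCompact_uIcc.exists_isMinOn nonempty_uIcc hg
  refine ⟨y, hy, ?_⟩
  calc |b - a| * g y = ∫ _ in Ι a b, g y := by
        rw [setIntegral_const, smul_eq_mul, measureReal_def, Real.volume_uIoc,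
          ENNReal.toReal_ofReal (abs_nonneg _)]
    _ ≤ ∫ t in Ι a b, g t :=
        setIntegral_mono_on (integrableOn_const (by simp [Real.volume_uIoc]))
          ((hg.integrableOn_compact isCompact_uIcc).mono_set uIoc_subset_uIcc) measurableSet_uIoc
          fun t ht ↦ hmin (uIoc_subset_uIcc ht)

lemma abs_half_le_abs_of_mem_uIcc {x t : ℝ} (ht : t ∈ uIcc (x / 2) x) : |x| / 2 ≤ |t| := by
  rcases le_total 0 x with hx | hx
  · rw [uIcc_of_le (by linarith)] at ht
    rw [abs_of_nonneg hx]
    exact ht.1.trans (le_abs_self t)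
  · rw [uIcc_of_ge (by linarith)] at ht
    rw [abs_of_nonpos hx]
    linarith [ht.2, neg_le_abs t]

section Primitive

variable {f f' : ℝ → ℝ}

lemma eq_add_integral_of_eq_primitive (hloc : LocallyIntegrable f' volume)
    (hrep : ∀ x, f x = f 0 + ∫ t in (0:ℝ)..x, f' t) (a x : ℝ) :
    f x = f a + ∫ t in a..x, f' t := by
  have hint (u v : ℝ) : IntervalIntegrable f' volume u v :=
    (hloc.integrableOn_isCompact isCompact_uIcc).intervalIntegrable
  rw [hrep x, hrep a, add_assoc,
    intervalIntegral.integral_add_adjacent_intervals (hint _ _) (hint _ _)]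

lemma absolutelyContinuousOnInterval_of_eq_primitive (hloc : LocallyIntegrable f' volume)
    (hrep : ∀ x, f x = f 0 + ∫ t in (0:ℝ)..x, f' t) (a b : ℝ) :
    AbsolutelyContinuousOnInterval f a b := by
  have h := (contDiffOn_const (c := f a) (s := uIcc a b)).absolutelyContinuousOnInterval.fun_add
    (((hloc.integrableOn_isCompact isCompact_uIcc).intervalIntegrable
      (a := a) (b := b)).absolutelyContinuousOnInterval_intervalIntegral left_mem_uIcc)
  rwa [← funext (eq_add_integral_of_eq_primitive hloc hrep a)] at h

lemma ae_hasDerivAt_of_eq_primitive (hloc : LocallyIntegrable f' volume)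
    (hrep : ∀ x, f x = f 0 + ∫ t in (0:ℝ)..x, f' t) : ∀ᵐ x, HasDerivAt f (f' x) x := by
  filter_upwards [LocallyIntegrable.ae_hasDerivAt_integral hloc] with x hx
  rw [funext hrep]
  exact (hx 0).const_add _

lemma sq_sub_sq_eq_integral_of_eq_primitive (hloc : LocallyIntegrable f' volume)
    (hrep : ∀ x, f x = f 0 + ∫ t in (0:ℝ)..x, f' t) (a b : ℝ) :
    f b ^ 2 - f a ^ 2 = ∫ t in a..b, 2 * f t * f' t := by
  have hAC := absolutelyContinuousOnInterval_of_eq_primitive hloc hrep a b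
  rw [sq, sq, ← hAC.integral_deriv_mul_eq_sub hAC]
  refine intervalIntegral.integral_congr_ae ?_
  filter_upwards [ae_hasDerivAt_of_eq_primitive hloc hrep] with t ht _
  rw [ht.deriv]
  ring

end Primitive

noncomputable def energyDensity (N : ℕ) (f f' : ℝ → ℝ) (t : ℝ) : ℝ :=
  (jp t ^ N * f t) ^ 2 + (jp t ^ (N + 1) * f' t) ^ 2

section Weighted

variable {N : ℕ} {f f' : ℝ → ℝ}

lemma energyDensity_nonneg (t : ℝ) : 0 ≤ energyDensity N f f' t := by
  unfold energyDensity
  positivity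

lemma integrable_energyDensity (hf : MemLp (fun x ↦ jp x ^ N * f x) 2 volume)
    (hf' : MemLp (fun x ↦ jp x ^ (N + 1) * f' x) 2 volume) :
    Integrable (energyDensity N f f') :=
  hf.integrable_sq.add hf'.integrable_sq

lemma pow_mul_sq_le_energyDensity {R t : ℝ} (hR : 0 ≤ R) (hRt : R ≤ |t|) :
    R ^ (2 * N) * f t ^ 2 ≤ energyDensity N f f' t := by
  have hjp : R ^ N ≤ jp t ^ N := pow_le_pow_left₀ hR (hRt.trans (abs_le_jp t)) N
  calc R ^ (2 * N) * f t ^ 2 = (R ^ N) ^ 2 * f t ^ 2 := by ring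
    _ ≤ (jp t ^ N) ^ 2 * f t ^ 2 := by gcongr
    _ ≤ energyDensity N f f' t := by
      rw [energyDensity, mul_pow]
      exact le_add_of_nonneg_right (sq_nonneg _)

lemma pow_mul_abs_le_energyDensity {R t : ℝ} (hR : 0 ≤ R) (hRt : R ≤ |t|) :
    R ^ (2 * N + 1) * |2 * f t * f' t| ≤ energyDensity N f f' t := by
  have hjp : 0 ≤ jp t := jp_nonneg t
  calc R ^ (2 * N + 1) * |2 * f t * f' t| ≤ jp t ^ (2 * N + 1) * |2 * f t * f' t| := by
        gcongr
        exact hRt.trans (abs_le_jp t)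
    _ = 2 * |jp t ^ N * f t| * |jp t ^ (N + 1) * f' t| := by
        simp only [abs_mul, abs_pow, abs_of_nonneg hjp, abs_two]
        ring
    _ ≤ |jp t ^ N * f t| ^ 2 + |jp t ^ (N + 1) * f' t| ^ 2 := two_mul_le_add_sq _ _
    _ = energyDensity N f f' t := by rw [sq_abs, sq_abs, energyDensity]

lemma exists_mem_uIcc_pow_mul_sq_le {R a b : ℝ} (hW : Integrable (energyDensity N f f'))
    (hcont : ContinuousOn f (uIcc a b)) (hR : 0 ≤ R) (hRab : ∀ t ∈ uIcc a b, R ≤ |t|) :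
    ∃ y ∈ uIcc a b,
      |b - a| * (R ^ (2 * N) * f y ^ 2) ≤ ∫ t in Ι a b, energyDensity N f f' t := by
  have hcont' : ContinuousOn (fun t ↦ R ^ (2 * N) * f t ^ 2) (uIcc a b) :=
    continuousOn_const.mul (hcont.pow 2)
  obtain ⟨y, hy, hmean⟩ := exists_mem_uIcc_mul_le_setIntegral hcont'
  refine ⟨y, hy, hmean.trans <| setIntegral_mono_on
    ((hcont'.integrableOn_compact isCompact_uIcc).mono_set uIoc_subset_uIcc) hW.integrableOn
    measurableSet_uIoc fun t ht ↦ pow_mul_sq_le_energyDensity hR (hRab t (uIoc_subset_uIcc ht))⟩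

lemma pow_mul_abs_sq_sub_sq_le (hloc : LocallyIntegrable f' volume)
    (hrep : ∀ x, f x = f 0 + ∫ t in (0:ℝ)..x, f' t) (hW : Integrable (energyDensity N f f'))
    {R a b : ℝ} (hR : 0 ≤ R) (hRab : ∀ t ∈ uIcc a b, R ≤ |t|) :
    R ^ (2 * N + 1) * |f b ^ 2 - f a ^ 2| ≤ ∫ t in Ι a b, energyDensity N f f' t := by
  have hint : IntervalIntegrable (fun t ↦ 2 * f t * f' t) volume a b :=
    ((hloc.integrableOn_isCompact isCompact_uIcc).intervalIntegrable).continuousOn_mul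
      (continuousOn_const.mul
        (absolutelyContinuousOnInterval_of_eq_primitive hloc hrep a b).continuousOn)
  rw [sq_sub_sq_eq_integral_of_eq_primitive hloc hrep]
  calc R ^ (2 * N + 1) * |∫ t in a..b, 2 * f t * f' t|
      ≤ R ^ (2 * N + 1) * ∫ t in Ι a b, |2 * f t * f' t| := by
        gcongr
        simpa only [Real.norm_eq_abs] using
          intervalIntegral.norm_integral_le_integral_norm_uIoc (f := fun t ↦ 2 * f t * f' t)
    _ = ∫ t in Ι a b, R ^ (2 * N + 1) * |2 * f t * f' t| := (integral_const_mul _ _).symm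
    _ ≤ ∫ t in Ι a b, energyDensity N f f' t :=
        setIntegral_mono_on ((intervalIntegrable_iff.1 hint).norm.const_mul _) hW.integrableOn
          measurableSet_uIoc fun t ht ↦
            pow_mul_abs_le_energyDensity hR (hRab t (uIoc_subset_uIcc ht))

lemma abs_half_pow_mul_sq_le (hloc : LocallyIntegrable f' volume)
    (hrep : ∀ x, f x = f 0 + ∫ t in (0:ℝ)..x, f' t) (hW : Integrable (energyDensity N f f'))
    (x : ℝ) :
    (|x| / 2) ^ (2 * N + 1) * f x ^ 2 ≤
      2 * ∫ t in {t | |x| / 2 ≤ |t|}, energyDensity N f f' t := by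
  set R := |x| / 2
  have hR : 0 ≤ R := by positivity
  have hsub : uIcc (x / 2) x ⊆ {t | R ≤ |t|} := fun t ↦ abs_half_le_abs_of_mem_uIcc
  have htail {a b : ℝ} (hab : uIcc a b ⊆ uIcc (x / 2) x) :
      ∫ t in Ι a b, energyDensity N f f' t ≤
        ∫ t in {t | R ≤ |t|}, energyDensity N f f' t :=
    setIntegral_mono_set hW.integrableOn (ae_of_all _ energyDensity_nonneg)
      (uIoc_subset_uIcc.trans (hab.trans hsub)).eventuallyLE
  obtain ⟨y, hy, hmean⟩ := exists_mem_uIcc_pow_mul_sq_le hW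
    (absolutelyContinuousOnInterval_of_eq_primitive hloc hrep _ _).continuousOn hR hsub
  have hyx : uIcc y x ⊆ uIcc (x / 2) x := uIcc_subset_uIcc hy right_mem_uIcc
  have hdiff := pow_mul_abs_sq_sub_sq_le hloc hrep hW hR fun t ht ↦ hsub (hyx ht)
  have hlen : |x - x / 2| = R := by rw [show x - x / 2 = x / 2 by ring, abs_div, abs_two]
  rw [hlen] at hmean
  calc R ^ (2 * N + 1) * f x ^ 2
      ≤ R * (R ^ (2 * N) * f y ^ 2) + R ^ (2 * N + 1) * |f x ^ 2 - f y ^ 2| := by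
        rw [show R * (R ^ (2 * N) * f y ^ 2) = R ^ (2 * N + 1) * f y ^ 2 by ring, ← mul_add]
        gcongr
        linarith [le_abs_self (f x ^ 2 - f y ^ 2)]
    _ ≤ (∫ t in Ι (x / 2) x, energyDensity N f f' t) +
          ∫ t in Ι y x, energyDensity N f f' t :=
        add_le_add hmean hdiff
    _ ≤ 2 * ∫ t in {t | R ≤ |t|}, energyDensity N f f' t := by
        linarith [htail le_rfl, htail hyx]

lemma tendsto_jp_pow_mul_sq_cocompact (hloc : LocallyIntegrable f' volume)
    (hrep : ∀ x, f x = f 0 + ∫ t in (0:ℝ)..x, f' t) (hW : Integrable (energyDensity N f f')) :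
    Tendsto (fun x ↦ jp x ^ (2 * N + 1) * f x ^ 2) (cocompact ℝ) (𝓝 0) := by
  have habs : Tendsto (fun x : ℝ ↦ |x|) (cocompact ℝ) atTop := tendsto_norm_cocompact_atTop
  have htail := ((tendsto_setIntegral_le_abs_atTop hW).comp
    (habs.atTop_div_const two_pos)).const_mul (2 * 4 ^ (2 * N + 1))
  rw [mul_zero] at htail
  refine squeeze_zero'
    (Eventually.of_forall fun x ↦ mul_nonneg (pow_nonneg (jp_nonneg x) _) (sq_nonneg _)) ?_ htail
  filter_upwards [habs.eventually_ge_atTop 1] with x hx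
  have hjp : jp x ^ (2 * N + 1) ≤ 4 ^ (2 * N + 1) * (|x| / 2) ^ (2 * N + 1) := by
    rw [← mul_pow, show 4 * (|x| / 2) = 2 * |x| by ring]
    exact pow_le_pow_left₀ (jp_nonneg x) (jp_le_two_mul_abs hx) _
  calc jp x ^ (2 * N + 1) * f x ^ 2 ≤ 4 ^ (2 * N + 1) * ((|x| / 2) ^ (2 * N + 1) * f x ^ 2) := by
        rw [← mul_assoc]
        gcongr
    _ ≤ 4 ^ (2 * N + 1) * (2 * ∫ t in {t | |x| / 2 ≤ |t|}, energyDensity N f f' t) :=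
        mul_le_mul_of_nonneg_left (abs_half_pow_mul_sq_le hloc hrep hW x) (by positivity)
    _ = _ := by simp only [Function.comp_apply]; ring

end Weighted

/-- `f ∈ H¹_loc` is encoded by the representation of `f` as a primitive of its weak derivative
`f'`. -/
theorem stmt0 (N : ℕ) (f f' : ℝ → ℝ)
    (hloc : LocallyIntegrable f' volume)
    (hrep : ∀ x : ℝ, f x = f 0 + ∫ t in (0:ℝ)..x, f' t)
    (hf : MemLp (fun x => jp x ^ N * f x) 2 volume)
    (hf' : MemLp (fun x => jp x ^ (N + 1) * f' x) 2 volume) :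
    Tendsto (fun x => jp x ^ ((N : ℝ) + 1 / 2) * f x) (cocompact ℝ) (nhds 0) := by
  have hsq := tendsto_jp_pow_mul_sq_cocompact hloc hrep (integrable_energyDensity hf hf')
  rw [tendsto_zero_iff_abs_tendsto_zero]
  convert (Real.continuous_sqrt.tendsto 0).comp hsq using 1
  · funext x
    rw [Function.comp_apply, Function.comp_apply, ← jp_rpow_add_half_sq, ← mul_pow,
      Real.sqrt_sq_eq_abs]
  · rw [Real.sqrt_zero]
end

section
/- Let N ≥ 0 be an integer. There exists a constant C > 0 such that for every f ∈ W^1_N(ℝ) one has sup_{x∈ℝ} |f(x)| ⟨x⟩^{N+1/2} ≤ C ‖f‖_{W^1_N}. -/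
/-!
Let `I` be an interval of length `⟨x⟩` that contains `x` and lies on the side of `x` away from
the origin, so that `⟨x⟩ ≤ ⟨t⟩` on `I`. For `y ∈ I` we have `|f x| ≤ |f y| + ∫_I |f'|`; squaring,
averaging over `y ∈ I` and applying Cauchy–Schwarz to `∫_I |f'|` gives
`⟨x⟩ f(x)² ≤ 2 ∫_I f² + 2 ⟨x⟩² ∫_I f'²`. Multiplying by `⟨x⟩^{2N}` and moving the weight inside
the integrals bounds `⟨x⟩^{2N+1} f(x)²` by `2 ‖f‖²_{W¹_N}`, so `C = √2` works.
-/

open MeasureTheory Filter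

open Set

namespace MeasureTheory

variable {α : Type*} [MeasurableSpace α] {μ : Measure α}

theorem toReal_eLpNorm_two_sq {g : α → ℝ} (hg : AEStronglyMeasurable g μ) :
    (eLpNorm g 2 μ).toReal ^ 2 = ∫ x, g x ^ 2 ∂μ := by
  have h := lpNorm_nnreal_eq_integral_norm_rpow (p := 2) two_ne_zero hg
  push_cast at h
  rw [toReal_eLpNorm hg, h, ← Nat.cast_ofNat, Real.rpow_inv_natCast_pow (by positivity) two_ne_zero]
  simp [Real.norm_eq_abs]

/-- Cauchy–Schwarz against the constant `1`, via Jensen's inequality for `x ↦ x²`. -/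
theorem sq_setIntegral_le_measureReal_mul {s : Set α} (hs : μ s ≠ ⊤) {g : α → ℝ}
    (hg : IntegrableOn g s μ) (hg2 : IntegrableOn (fun x ↦ g x ^ 2) s μ) :
    (∫ x in s, g x ∂μ) ^ 2 ≤ μ.real s * ∫ x in s, g x ^ 2 ∂μ := by
  rcases eq_or_ne (μ s) 0 with hs0 | hs0
  · simp [Measure.restrict_eq_zero.2 hs0]
  have jensen := even_two.convexOn_pow.map_set_average_le (continuousOn_pow 2) isClosed_univ
    hs0 hs (.of_forall fun _ ↦ mem_univ _) hg hg2
  have hpos : 0 < μ.real s := ENNReal.toReal_pos hs0 hs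
  simp only [setAverage_eq, smul_eq_mul] at jensen
  rw [mul_pow, inv_pow, ← div_eq_inv_mul, ← div_eq_inv_mul, div_le_div_iff₀ (by positivity) hpos]
    at jensen
  nlinarith

variable {w g : α → ℝ} {k : ℕ}

theorem integrable_sq_of_integrable_sq_pow_mul (hw : ∀ t, 1 ≤ w t)
    (hg : AEStronglyMeasurable g μ) (hwg : Integrable (fun t ↦ (w t ^ k * g t) ^ 2) μ) :
    Integrable (fun t ↦ g t ^ 2) μ := by
  refine hwg.mono (hg.pow 2) (.of_forall fun t ↦ ?_)
  have hw2 : 1 ≤ (w t ^ k) ^ 2 := one_le_pow₀ (one_le_pow₀ (hw t))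
  rw [Real.norm_of_nonneg (by positivity), Real.norm_of_nonneg (by positivity), mul_pow]
  exact le_mul_of_one_le_left (sq_nonneg _) hw2

theorem pow_mul_setIntegral_sq_le {s : Set α} (hs : MeasurableSet s) {c : ℝ} (hc : 0 ≤ c)
    (hcw : ∀ t ∈ s, c ≤ w t) (hg : IntegrableOn (fun t ↦ g t ^ 2) s μ)
    (hwg : Integrable (fun t ↦ (w t ^ k * g t) ^ 2) μ) :
    c ^ (2 * k) * ∫ t in s, g t ^ 2 ∂μ ≤ ∫ t, (w t ^ k * g t) ^ 2 ∂μ := by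
  rw [← integral_const_mul]
  calc ∫ t in s, c ^ (2 * k) * g t ^ 2 ∂μ ≤ ∫ t in s, (w t ^ k * g t) ^ 2 ∂μ := by
        refine setIntegral_mono_on (hg.const_mul _) hwg.integrableOn hs fun t ht ↦ ?_
        rw [mul_pow, ← pow_mul, mul_comm k]
        gcongr
        exact hcw t ht
    _ ≤ ∫ t, (w t ^ k * g t) ^ 2 ∂μ :=
        setIntegral_le_integral hwg (.of_forall fun _ ↦ sq_nonneg _)

end MeasureTheory

section Interval

variable {f f' : ℝ → ℝ} {a b x : ℝ}

theorem abs_sub_le_setIntegral_abs_Icc (hf' : IntegrableOn f' (Icc a b))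
    (hftc : ∀ y z, f z - f y = ∫ t in y..z, f' t) {y z : ℝ} (hy : y ∈ Icc a b)
    (hz : z ∈ Icc a b) : |f z - f y| ≤ ∫ t in Icc a b, |f' t| := by
  rw [hftc]
  calc |∫ t in y..z, f' t| ≤ ∫ t in uIoc y z, |f' t| := by
        simpa only [Real.norm_eq_abs] using
          intervalIntegral.norm_integral_le_integral_norm_uIoc (f := f') (μ := volume)
    _ ≤ ∫ t in Icc a b, |f' t| :=
        setIntegral_mono_set hf'.abs (.of_forall fun _ ↦ abs_nonneg _)
          (uIoc_subset_uIcc.trans (uIcc_subset_Icc hy hz)).eventuallyLE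

theorem sub_mul_sq_le_of_mem_Icc (hx : x ∈ Icc a b)
    (hf2 : IntegrableOn (fun t ↦ f t ^ 2) (Icc a b)) (hf' : IntegrableOn f' (Icc a b))
    (hf'2 : IntegrableOn (fun t ↦ f' t ^ 2) (Icc a b))
    (hftc : ∀ y z, f z - f y = ∫ t in y..z, f' t) :
    (b - a) * f x ^ 2 ≤
      2 * (∫ t in Icc a b, f t ^ 2) + 2 * (b - a) ^ 2 * ∫ t in Icc a b, f' t ^ 2 := by
  have hab : 0 ≤ b - a := by linarith [hx.1, hx.2]
  have hvol : volume.real (Icc a b) = b - a := by simp [hx.1.trans hx.2]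
  set M := ∫ t in Icc a b, |f' t|
  have pointwise : ∀ y ∈ Icc a b, f x ^ 2 ≤ 2 * f y ^ 2 + 2 * M ^ 2 := fun y hy ↦ by
    have hdiff : |f x - f y| ≤ M := abs_sub_le_setIntegral_abs_Icc hf' hftc hy hx
    have hdiff_sq : (f x - f y) ^ 2 ≤ M ^ 2 := by
      simpa only [sq_abs] using pow_le_pow_left₀ (abs_nonneg _) hdiff 2
    nlinarith [sq_nonneg (f x - 2 * f y)]
  have averaged : (b - a) * f x ^ 2 ≤ 2 * (∫ t in Icc a b, f t ^ 2) + (b - a) * (2 * M ^ 2) := by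
    have hrhs : IntegrableOn (fun y ↦ 2 * f y ^ 2 + 2 * M ^ 2) (Icc a b) :=
      (hf2.const_mul 2).add (integrableOn_const (by simp))
    have := setIntegral_mono_on (integrableOn_const (by simp)) hrhs measurableSet_Icc pointwise
    rwa [integral_add (hf2.const_mul 2) (integrableOn_const (by simp)), integral_const_mul,
      setIntegral_const, setIntegral_const, smul_eq_mul, smul_eq_mul, hvol] at this
  have cauchySchwarz : M ^ 2 ≤ (b - a) * ∫ t in Icc a b, f' t ^ 2 := by
    simpa only [hvol, sq_abs] using
      sq_setIntegral_le_measureReal_mul (by simp) hf'.abs (by simpa only [sq_abs] using hf'2)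
  linear_combination averaged + 2 * (b - a) * cauchySchwarz

end Interval

theorem sq_rpow_natCast_add_half {y : ℝ} (hy : 0 ≤ y) (n : ℕ) :
    (y ^ ((n : ℝ) + 1 / 2)) ^ 2 = y ^ (2 * n + 1) := by
  rw [← Real.rpow_natCast _ 2, ← Real.rpow_mul hy, ← Real.rpow_natCast]
  push_cast
  ring_nf

theorem jp_pos (x : ℝ) : 0 < jp x := Real.sqrt_pos.2 (by positivity)

theorem one_le_jp (x : ℝ) : 1 ≤ jp x :=
  Real.one_le_sqrt.2 (by nlinarith [sq_nonneg x])

theorem jp_le_jp {x t : ℝ} (h : |x| ≤ |t|) : jp x ≤ jp t :=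
  Real.sqrt_le_sqrt (by nlinarith [sq_le_sq.2 h])

theorem exists_Icc_jp_le (x : ℝ) :
    ∃ a b, x ∈ Icc a b ∧ b - a = jp x ∧ ∀ t ∈ Icc a b, jp x ≤ jp t := by
  rcases le_or_gt 0 x with hx | hx
  · refine ⟨x, x + jp x, ⟨le_rfl, by linarith [jp_pos x]⟩, by ring, fun t ht ↦ jp_le_jp ?_⟩
    rw [abs_of_nonneg hx, abs_of_nonneg (hx.trans ht.1)]
    exact ht.1
  · refine ⟨x - jp x, x, ⟨by linarith [jp_pos x], le_rfl⟩, by ring, fun t ht ↦ jp_le_jp ?_⟩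
    rw [abs_of_neg hx]
    exact (neg_le_neg ht.2).trans (neg_le_abs t)

theorem jp_pow_mul_sq_le {f f' : ℝ → ℝ} (N : ℕ) (hf : Continuous f)
    (hf' : LocallyIntegrable f') (hftc : ∀ y z, f z - f y = ∫ t in y..z, f' t)
    (hf2 : Integrable (fun t ↦ (jp t ^ N * f t) ^ 2))
    (hf'2 : Integrable (fun t ↦ (jp t ^ (N + 1) * f' t) ^ 2)) (x : ℝ) :
    jp x ^ (2 * N + 1) * f x ^ 2 ≤
      2 * (∫ t, (jp t ^ N * f t) ^ 2) + 2 * ∫ t, (jp t ^ (N + 1) * f' t) ^ 2 := by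
  obtain ⟨a, b, hx, hlen, hjp⟩ := exists_Icc_jp_le x
  have hfIcc : IntegrableOn (fun t ↦ f t ^ 2) (Icc a b) := (hf.pow 2).integrableOn_Icc
  have hf'Icc : IntegrableOn (fun t ↦ f' t ^ 2) (Icc a b) :=
    (integrable_sq_of_integrable_sq_pow_mul one_le_jp hf'.aestronglyMeasurable hf'2).integrableOn
  have hlocal := sub_mul_sq_le_of_mem_Icc hx hfIcc (hf'.integrableOn_isCompact isCompact_Icc)
    hf'Icc hftc
  rw [hlen] at hlocal
  have hweight := pow_mul_setIntegral_sq_le measurableSet_Icc (jp_pos x).le hjp hfIcc hf2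
  have hweight' := pow_mul_setIntegral_sq_le measurableSet_Icc (jp_pos x).le hjp hf'Icc hf'2
  calc jp x ^ (2 * N + 1) * f x ^ 2 = jp x ^ (2 * N) * (jp x * f x ^ 2) := by ring
    _ ≤ jp x ^ (2 * N) * (2 * (∫ t in Icc a b, f t ^ 2) +
          2 * jp x ^ 2 * ∫ t in Icc a b, f' t ^ 2) :=
        mul_le_mul_of_nonneg_left hlocal (pow_pos (jp_pos x) _).le
    _ = 2 * (jp x ^ (2 * N) * ∫ t in Icc a b, f t ^ 2) +
          2 * (jp x ^ (2 * (N + 1)) * ∫ t in Icc a b, f' t ^ 2) := by ring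
    _ ≤ _ := by gcongr

/-- There is `C > 0` such that every `f ∈ W¹_N(ℝ)` (encoded via its weak derivative `f'`)
satisfies `sup_x |f(x)| ⟨x⟩^(N+1/2) ≤ C ‖f‖_{W¹_N}`. -/
theorem stmt1 (N : ℕ) :
    ∃ C > (0:ℝ), ∀ f f' : ℝ → ℝ,
      LocallyIntegrable f' volume →
      (∀ x : ℝ, f x = f 0 + ∫ t in (0:ℝ)..x, f' t) →
      MemLp (fun x => jp x ^ N * f x) 2 volume →
      MemLp (fun x => jp x ^ (N + 1) * f' x) 2 volume →
      ∀ x : ℝ, |f x| * jp x ^ ((N : ℝ) + 1 / 2) ≤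
        C * Real.sqrt
          ((eLpNorm (fun x => jp x ^ N * f x) 2 volume).toReal ^ 2 +
            (eLpNorm (fun x => jp x ^ (N + 1) * f' x) 2 volume).toReal ^ 2) := by
  refine ⟨√2, by positivity, fun f f' hloc hftc hf hf' x ↦ ?_⟩
  have hii (y z : ℝ) : IntervalIntegrable f' volume y z :=
    (hloc.integrableOn_isCompact isCompact_uIcc).intervalIntegrable
  have hcont : Continuous f :=
    (continuous_const.add (intervalIntegral.continuous_primitive hii 0)).congr fun y ↦ (hftc y).symm
  have hsub (y z : ℝ) : f z - f y = ∫ t in y..z, f' t := by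
    rw [hftc z, hftc y, add_sub_add_left_eq_sub,
      intervalIntegral.integral_interval_sub_left (hii 0 z) (hii 0 y)]
  have key := jp_pow_mul_sq_le N hcont hloc hsub hf.integrable_sq hf'.integrable_sq x
  rw [← toReal_eLpNorm_two_sq hf.aestronglyMeasurable,
    ← toReal_eLpNorm_two_sq hf'.aestronglyMeasurable] at key
  rw [← Real.sqrt_mul zero_le_two]
  refine Real.le_sqrt_of_sq_le ?_
  rw [mul_pow, sq_abs, sq_rpow_natCast_add_half (jp_pos x).le]
  linarith
end
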